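/- In the Baumslag–Solitar monoid $BS(c,d)^+$ with $c,d \in \mathbb{Z}^\times$ and $|d| > 1$, two elements $s, t$ with normal forms $s = \ib^{i_1}\ia\ib^{i_2}\ia\cdots\ia\ib^{i_{\theta(s)}}\ia\ib^m$ and $t = \ib^{j_1}\ia\ib^{j_2}\ia\cdots\ia\ib^{j_{\theta(t)}}\ia\ib^n$ are core equivalent ($s \sim t$) if and only if $\theta(s) = \theta(t) =: k \geq 1$ and $i_\ell = j_\ell$ for all $1 \leq \ell \leq k$; consequently the number of core equivalence classes in $\theta^{-1}(k)$ equals $|d|^k$, and $N(s) := |d|^{\theta(s)}$ satisfies $|N^{-1}(n)/_\sim| = n$ for every $n \in N(BS(c,d)^+)$. -/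

import Mathlib

/-- The defining relation of `BS(c,d)⁺`: `a b^{|c|} = b^{|d|} a` when `cd > 0`, and
`b^{|d|} a b^{|c|} = a` when `cd < 0` (generators: `0 ↦ a`, `1 ↦ b`). -/
def BSRel (c d : ℤ) (x y : FreeMonoid (Fin 2)) : Prop :=
  if 0 < c * d then
    x = FreeMonoid.of 0 * FreeMonoid.of 1 ^ c.natAbs ∧
      y = FreeMonoid.of 1 ^ d.natAbs * FreeMonoid.of 0
  else
    x = FreeMonoid.of 1 ^ d.natAbs * FreeMonoid.of 0 * FreeMonoid.of 1 ^ c.natAbs ∧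
      y = FreeMonoid.of 0

/-- The congruence generated by the defining relation of `BS(c,d)⁺`. -/
def BSCon (c d : ℤ) : Con (FreeMonoid (Fin 2)) := conGen (BSRel c d)

/-- The Baumslag–Solitar monoid `BS(c,d)⁺`. -/
abbrev BSM (c d : ℤ) := (BSCon c d).Quotient

/-- The generator `a` of `BS(c,d)⁺`. -/
def bsA (c d : ℤ) : BSM c d := (BSCon c d).mk' (FreeMonoid.of 0)

/-- The generator `b` of `BS(c,d)⁺`. -/
def bsB (c d : ℤ) : BSM c d := (BSCon c d).mk' (FreeMonoid.of 1)

/-- The principal right ideal `sS`. -/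
def rIdeal {S : Type*} [Monoid S] (s : S) : Set S := {z | ∃ x, z = s * x}

/-- `s` and `t` admit a right common multiple. -/
def Cap {S : Type*} [Monoid S] (s t : S) : Prop := (rIdeal s ∩ rIdeal t).Nonempty

/-- The core `S_c` of a monoid. -/
def core (S : Type*) [Monoid S] : Set S := {a | ∀ s : S, Cap a s}

/-- Core equivalence: `s ∼ t` iff `s a = t b` for some `a, b` in the core. -/
def coreEquiv {S : Type*} [Monoid S] (s t : S) : Prop :=
  ∃ a ∈ core S, ∃ b ∈ core S, s * a = t * b

/-- The set of core equivalence classes of elements of `N⁻¹(n)` for `N : S → ℕ`. -/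
def classSetN {S : Type*} [Monoid S] (N : S → ℕ) (n : ℕ) : Set (Set S) :=
  {C | ∃ s, N s = n ∧ C = {t | N t = n ∧ coreEquiv s t}}

/-- The word `b^{i₁} a b^{i₂} a ⋯ b^{i_k} a` in `BS(c,d)⁺`. -/
def nfWord (c d : ℤ) (k : ℕ) (i : Fin k → ℕ) : BSM c d :=
  (List.ofFn fun l : Fin k => bsB c d ^ i l * bsA c d).prod

/-- `s` has normal form `b^{i₁} a ⋯ b^{i_k} a b^m`, with `0 ≤ i_l < |d|` and `m ∈ ℤ`
(a negative tail `b^m` is encoded by `s b^{-m} = b^{i₁} a ⋯ b^{i_k} a`). -/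
def HasNF (c d : ℤ) (s : BSM c d) (k : ℕ) (i : Fin k → ℕ) (m : ℤ) : Prop :=
  (∀ l, i l < d.natAbs) ∧
    if 0 ≤ m then s = nfWord c d k i * bsB c d ^ m.toNat
    else s * bsB c d ^ (-m).toNat = nfWord c d k i

namespace BSAux
set_option linter.unusedSectionVars false

variable (D : ℕ) (e : ℤ)

lemma emod_bounds [NeZero D] (x : ℤ) : 0 ≤ x % (D:ℤ) ∧ x % (D:ℤ) < D := by
  have hD : (0:ℤ) < D := by
    have := NeZero.ne D; omega
  exact ⟨Int.emod_nonneg x (by omega), Int.emod_lt_of_pos x hD⟩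

/-- the residue as an element of `Fin D` -/
def res [NeZero D] (x : ℤ) : Fin D :=
  ⟨(x % (D:ℤ)).toNat, by have := emod_bounds D x; omega⟩

@[simp] lemma res_coe [NeZero D] (x : ℤ) : ((res D x : Fin D) : ℤ) = x % (D:ℤ) := by
  have := emod_bounds D x
  show (((x % (D:ℤ)).toNat : ℕ) : ℤ) = _
  omega

variable [NeZero D]

def resid : ℤ → List (Fin D) → List (Fin D)
  | _, [] => []
  | t, i :: w => res D (t + i) :: resid (e * ((t + (i:ℤ)) / D)) w

def carry : ℤ → List (Fin D) → ℤ
  | t, [] => t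
  | t, i :: w => carry (e * ((t + (i:ℤ)) / D)) w

@[simp] lemma resid_nil (t : ℤ) : resid D e t [] = [] := rfl
@[simp] lemma carry_nil (t : ℤ) : carry D e t [] = t := rfl
lemma resid_cons (t : ℤ) (i : Fin D) (w : List (Fin D)) :
    resid D e t (i :: w) = res D (t + i) :: resid D e (e * ((t + (i:ℤ)) / D)) w := rfl
lemma carry_cons (t : ℤ) (i : Fin D) (w : List (Fin D)) :
    carry D e t (i :: w) = carry D e (e * ((t + (i:ℤ)) / D)) w := rfl

@[simp] lemma length_resid (t : ℤ) (w : List (Fin D)) : (resid D e t w).length = w.length := by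
  induction w generalizing t with
  | nil => rfl
  | cons i w ih => simp [resid_cons, ih]

@[simp] lemma resid_zero (w : List (Fin D)) : resid D e 0 w = w := by
  induction w with
  | nil => rfl
  | cons i w ih =>
    have h1 : ((i:ℤ)) % (D:ℤ) = i := Int.emod_eq_of_lt (by positivity) (by exact_mod_cast i.2)
    have h2 : ((i:ℤ)) / (D:ℤ) = 0 := Int.ediv_eq_zero_of_lt (by positivity) (by exact_mod_cast i.2)
    simp [resid_cons, res, h1, h2, ih, Fin.ext_iff]

@[simp] lemma carry_zero (w : List (Fin D)) : carry D e 0 w = 0 := by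
  induction w with
  | nil => rfl
  | cons i w ih =>
    have h2 : ((i:ℤ)) / (D:ℤ) = 0 := Int.ediv_eq_zero_of_lt (by positivity) (by exact_mod_cast i.2)
    simp [carry_cons, h2, ih]

lemma resid_append (t : ℤ) (u v : List (Fin D)) :
    resid D e t (u ++ v) = resid D e t u ++ resid D e (carry D e t u) v := by
  induction u generalizing t with
  | nil => simp
  | cons i u ih => simp [resid_cons, carry_cons, ih]

lemma carry_append (t : ℤ) (u v : List (Fin D)) :
    carry D e t (u ++ v) = carry D e (carry D e t u) v := by
  induction u generalizing t with
  | nil => simp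
  | cons i u ih => simp [carry_cons, ih]

lemma key (s t : ℤ) (w : List (Fin D)) :
    resid D e s (resid D e t w) = resid D e (s + t) w ∧
      carry D e s (resid D e t w) + carry D e t w = carry D e (s + t) w := by
  induction w generalizing s t with
  | nil => simp [add_comm]
  | cons i w ih =>
    have hD : (0:ℤ) < D := by have := NeZero.ne D; omega
    set x : ℤ := t + i with hx
    have hb := emod_bounds D x
    have hres : ((res D x : Fin D) : ℤ) = x % D := res_coe D x
    have hsplit : x = D * (x / D) + x % D := (Int.mul_ediv_add_emod x D).symm
    -- arithmetic facts
    have hA : (s + x % D) % (D:ℤ) = (s + t + i) % D := by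
      have : s + t + i = s + x % D + (x / D) * D := by
        have h0 := Int.mul_ediv_add_emod x (D:ℤ)
        rw [hx] at h0 ⊢
        linarith
      rw [this, Int.add_mul_emod_self_right]
    have hB : (s + x % D) / (D:ℤ) + x / D = (s + t + i) / D := by
      have : s + t + i = s + x % D + (x / D) * D := by
        have h0 := Int.mul_ediv_add_emod x (D:ℤ)
        rw [hx] at h0 ⊢
        linarith
      rw [this, Int.add_mul_ediv_right _ _ (by omega : (D:ℤ) ≠ 0)]
    constructor
    · rw [resid_cons, resid_cons, resid_cons, hres]
      refine congrArg₂ List.cons ?_ ?_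
      · have : res D (s + x % ↑D) = res D (s + t + i) := by
          simp only [res, Fin.mk.injEq]
          rw [hA]
        exact this
      · rw [(ih _ _).1]
        congr 1
        rw [← mul_add, hB]
    · rw [resid_cons, carry_cons, carry_cons, carry_cons, hres]
      rw [(ih _ _).2]
      congr 1
      rw [← mul_add, hB]

/-- The model monoid: normal forms `b^{i₁} a ⋯ b^{i_k} a b^t`. -/
structure Model (D : ℕ) (e : ℤ) where
  w : List (Fin D)
  t : ℤ

instance : Monoid (Model D e) where
  mul x y := ⟨x.w ++ resid D e x.t y.w, carry D e x.t y.w + y.t⟩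
  one := ⟨[], 0⟩
  mul_assoc := by
    rintro ⟨w1, t1⟩ ⟨w2, t2⟩ ⟨w3, t3⟩
    show Model.mk ((w1 ++ resid D e t1 w2) ++ resid D e (carry D e t1 w2 + t2) w3)
        (carry D e (carry D e t1 w2 + t2) w3 + t3) =
      Model.mk (w1 ++ resid D e t1 (w2 ++ resid D e t2 w3))
        (carry D e t1 (w2 ++ resid D e t2 w3) + (carry D e t2 w3 + t3))
    have h := key D e (carry D e t1 w2) t2 w3
    simp only [resid_append, carry_append, h.1, List.append_assoc]
    refine congrArg₂ Model.mk rfl ?_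
    rw [← h.2]
    ring
  one_mul x := by
    cases x with
    | mk w t =>
      show Model.mk ([] ++ resid D e 0 w) (carry D e 0 w + t) = Model.mk w t
      simp
  mul_one x := by
    cases x with
    | mk w t =>
      show Model.mk (w ++ resid D e t []) (carry D e t [] + 0) = Model.mk w t
      simp

lemma mul_def (x y : Model D e) :
    x * y = ⟨x.w ++ resid D e x.t y.w, carry D e x.t y.w + y.t⟩ := rfl

@[simp] lemma one_def : (1 : Model D e) = ⟨[], 0⟩ := rfl

@[simp] lemma w_mul (x y : Model D e) : (x * y).w = x.w ++ resid D e x.t y.w := rfl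
@[simp] lemma t_mul (x y : Model D e) : (x * y).t = carry D e x.t y.w + y.t := rfl
@[simp] lemma w_one : (1 : Model D e).w = [] := rfl
@[simp] lemma t_one : (1 : Model D e).t = 0 := rfl

lemma tail_mul (m m' : ℤ) :
    (⟨[], m⟩ : Model D e) * ⟨[], m'⟩ = ⟨[], m + m'⟩ := rfl

lemma tail_pow (n : ℕ) : (⟨[], (1:ℤ)⟩ : Model D e) ^ n = ⟨[], (n:ℤ)⟩ := by
  induction n with
  | zero => rfl
  | succ n ih => rw [pow_succ, ih, tail_mul]; push_cast; ring_nf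

lemma tail_mul_fac (r : ℕ) (hr : r < D) (x : Fin D) (hx : (x : ℕ) = 0) :
    (⟨[], (r:ℤ)⟩ : Model D e) * ⟨[x], 0⟩ = ⟨[⟨r, hr⟩], 0⟩ := by
  have hx' : ((x : Fin D) : ℤ) = 0 := by exact_mod_cast hx
  have h1 : ((r:ℤ) + ((x : Fin D) : ℤ)) = (r:ℤ) := by rw [hx', add_zero]
  have h2 : ((r:ℤ)) % (D:ℤ) = r := Int.emod_eq_of_lt (by positivity) (by exact_mod_cast hr)
  have h3 : ((r:ℤ)) / (D:ℤ) = 0 := Int.ediv_eq_zero_of_lt (by positivity) (by exact_mod_cast hr)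
  rw [mul_def, resid_cons, carry_cons, h1, h3, mul_zero]
  refine congrArg₂ Model.mk ?_ ?_
  · rw [resid_nil, List.nil_append]
    refine congrArg₂ List.cons ?_ rfl
    simp [res, h2]
  · simp

lemma cons_fac (x : Fin D) (W : List (Fin D)) :
    (⟨[x], 0⟩ : Model D e) * ⟨W, 0⟩ = ⟨x :: W, 0⟩ := by
  rw [mul_def]; simp

end BSAux
namespace BSAux

section BS
variable (c d : ℤ)

/-- carry multiplier -/
def ee : ℤ := if 0 < c * d then (c.natAbs : ℤ) else -(c.natAbs : ℤ)

variable [NeZero d.natAbs]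

def z0 : Fin d.natAbs := ⟨0, Nat.pos_of_ne_zero (NeZero.ne _)⟩

def phiF : FreeMonoid (Fin 2) →* Model d.natAbs (ee c d) :=
  FreeMonoid.lift (fun x => if x = 0 then ⟨[z0 d], 0⟩ else ⟨[], 1⟩)

lemma phiF_a : phiF c d (FreeMonoid.of 0) = ⟨[z0 d], 0⟩ := rfl
lemma phiF_b : phiF c d (FreeMonoid.of 1) = ⟨[], 1⟩ := rfl

lemma z0_coe : ((z0 d : Fin d.natAbs) : ℤ) = 0 := by simp [z0]

lemma hee_pos (hcd : 0 < c * d) : ee c d = (c.natAbs : ℤ) := by unfold ee; rw [if_pos hcd]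
lemma hee_neg (hcd : ¬ 0 < c * d) : ee c d = -(c.natAbs : ℤ) := by unfold ee; rw [if_neg hcd]

lemma hda0 (hd : d ≠ 0) :
    (⟨[], (d.natAbs:ℤ)⟩ : Model d.natAbs (ee c d)) * ⟨[z0 d], 0⟩ = ⟨[z0 d], ee c d⟩ := by
  have hD0 : ((d.natAbs:ℤ)) ≠ 0 := by simpa using hd
  rw [mul_def, resid_cons, carry_cons]
  have h1 : ((d.natAbs:ℤ) + ((z0 d : Fin d.natAbs) : ℤ)) = (d.natAbs:ℤ) := by
    rw [z0_coe, add_zero]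
  rw [h1, Int.ediv_self hD0, mul_one]
  refine congrArg₂ Model.mk ?_ ?_
  · rw [resid_nil, List.nil_append]
    refine congrArg₂ List.cons ?_ rfl
    simp [res, z0, Int.emod_self]
  · rw [carry_nil, add_zero]

lemma phiF_rel (hd : d ≠ 0) :
    BSCon c d ≤ Con.ker (phiF c d) := by
  apply Con.conGen_le.mpr
  intro x y hxy
  rw [Con.ker_rel]
  have hbd : phiF c d (FreeMonoid.of 1 ^ d.natAbs) = ⟨[], (d.natAbs : ℤ)⟩ := by
    rw [map_pow, phiF_b, tail_pow]
  have hbc : phiF c d (FreeMonoid.of 1 ^ c.natAbs) = ⟨[], (c.natAbs : ℤ)⟩ := by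
    rw [map_pow, phiF_b, tail_pow]
  unfold BSRel at hxy
  split_ifs at hxy with hcd
  · rcases hxy with ⟨hx, hy⟩
    subst hx; subst hy
    rw [map_mul, map_mul, hbd, hbc, phiF_a, hda0 c d hd, mul_def]
    simp [hee_pos c d hcd]
  · rcases hxy with ⟨hx, hy⟩
    subst hx; subst hy
    rw [map_mul, map_mul, hbd, hbc, phiF_a, hda0 c d hd, mul_def]
    simp [hee_neg c d hcd]

variable {c d}

def Phi (hd : d ≠ 0) : BSM c d →* Model d.natAbs (ee c d) :=
  Con.lift _ (phiF c d) (phiF_rel c d hd)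

variable (hd : d ≠ 0)

lemma fin2_cases (x : Fin 2) : x = 0 ∨ x = 1 := by
  rcases x with ⟨v, hv⟩
  interval_cases v
  · exact Or.inl rfl
  · exact Or.inr rfl

lemma Phi_mk (w : FreeMonoid (Fin 2)) : Phi hd ((BSCon c d).mk' w) = phiF c d w :=
  Con.lift_mk' _ _

lemma Phi_a : Phi hd (bsA c d) = ⟨[z0 d], 0⟩ := Phi_mk hd _
lemma Phi_b : Phi hd (bsB c d) = ⟨[], 1⟩ := Phi_mk hd _
lemma Phi_bpow (n : ℕ) : Phi hd (bsB c d ^ n) = ⟨[], (n:ℤ)⟩ := by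
  rw [map_pow, Phi_b, tail_pow]

lemma nfWord_zero (i : Fin 0 → ℕ) : nfWord c d 0 i = 1 := by
  simp [nfWord]

lemma nfWord_succ (k : ℕ) (i : Fin (k+1) → ℕ) :
    nfWord c d (k+1) i =
      (bsB c d ^ i 0 * bsA c d) * nfWord c d k (fun l => i l.succ) := by
  rw [nfWord, List.ofFn_succ, List.prod_cons, nfWord]

lemma Phi_nfWord (k : ℕ) (i : Fin k → ℕ) (hi : ∀ l, i l < d.natAbs) :
    Phi hd (nfWord c d k i) = ⟨List.ofFn (fun l => (⟨i l, hi l⟩ : Fin d.natAbs)), 0⟩ := by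
  induction k with
  | zero => rw [nfWord_zero, map_one, List.ofFn_zero]; rfl
  | succ k ih =>
    rw [nfWord_succ, map_mul, map_mul, Phi_bpow, Phi_a,
      tail_mul_fac _ _ _ (hi 0) _ rfl, ih (fun l => i l.succ) (fun l => hi l.succ),
      cons_fac, List.ofFn_succ]

lemma theta_eq (θ : BSM c d →* Multiplicative ℕ)
    (hθa : θ (bsA c d) = Multiplicative.ofAdd 1) (hθb : θ (bsB c d) = 1) :
    ∀ s : BSM c d, θ s = Multiplicative.ofAdd ((Phi hd) s).w.length := by
  intro s
  induction s using Con.induction_on with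
  | H w =>
    induction w using FreeMonoid.recOn with
    | one => simp
    | of_mul x xs ihx =>
      have hmk : ((x' : FreeMonoid (Fin 2)) → ((x' : (BSCon c d).Quotient)) = (BSCon c d).mk' x') :=
        fun _ => rfl
      simp only [hmk] at ihx ⊢
      rw [map_mul, map_mul, map_mul (Phi hd), w_mul, List.length_append, length_resid, ihx, ofAdd_add]
      congr 1
      fin_cases x
      · show Multiplicative.toAdd (θ (bsA c d)) = (Phi hd (bsA c d)).w.length
        rw [hθa, Phi_a]
        rfl
      · show Multiplicative.toAdd (θ (bsB c d)) = (Phi hd (bsB c d)).w.length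
        rw [hθb, Phi_b]
        rfl

lemma bs_relA (hcd : 0 < c * d) :
    bsA c d * bsB c d ^ c.natAbs = bsB c d ^ d.natAbs * bsA c d := by
  have h : BSRel c d (FreeMonoid.of 0 * FreeMonoid.of 1 ^ c.natAbs)
      (FreeMonoid.of 1 ^ d.natAbs * FreeMonoid.of 0) := by
    unfold BSRel
    rw [if_pos hcd]
    exact ⟨rfl, rfl⟩
  have hcg : (BSCon c d) (FreeMonoid.of 0 * FreeMonoid.of 1 ^ c.natAbs)
      (FreeMonoid.of 1 ^ d.natAbs * FreeMonoid.of 0) := ConGen.Rel.of _ _ h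
  have := (Con.eq (BSCon c d)).mpr hcg
  calc bsA c d * bsB c d ^ c.natAbs
      = (BSCon c d).mk' (FreeMonoid.of 0 * FreeMonoid.of 1 ^ c.natAbs) := by
        rw [map_mul, map_pow]; rfl
    _ = (BSCon c d).mk' (FreeMonoid.of 1 ^ d.natAbs * FreeMonoid.of 0) := this
    _ = bsB c d ^ d.natAbs * bsA c d := by rw [map_mul, map_pow]; rfl

lemma bs_relB (hcd : ¬ 0 < c * d) :
    bsB c d ^ d.natAbs * bsA c d * bsB c d ^ c.natAbs = bsA c d := by
  have h : BSRel c d (FreeMonoid.of 1 ^ d.natAbs * FreeMonoid.of 0 * FreeMonoid.of 1 ^ c.natAbs)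
      (FreeMonoid.of 0) := by
    unfold BSRel
    rw [if_neg hcd]
    exact ⟨rfl, rfl⟩
  have hcg : (BSCon c d) (FreeMonoid.of 1 ^ d.natAbs * FreeMonoid.of 0 * FreeMonoid.of 1 ^ c.natAbs)
      (FreeMonoid.of 0) := ConGen.Rel.of _ _ h
  have := (Con.eq (BSCon c d)).mpr hcg
  calc bsB c d ^ d.natAbs * bsA c d * bsB c d ^ c.natAbs
      = (BSCon c d).mk' (FreeMonoid.of 1 ^ d.natAbs * FreeMonoid.of 0 *
          FreeMonoid.of 1 ^ c.natAbs) := by rw [map_mul, map_mul, map_pow, map_pow]; rfl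
    _ = (BSCon c d).mk' (FreeMonoid.of 0) := this
    _ = bsA c d := rfl

lemma bs_relA' (hcd : 0 < c * d) (u : ℕ) :
    bsB c d ^ (d.natAbs * u) * bsA c d = bsA c d * bsB c d ^ (c.natAbs * u) := by
  induction u with
  | zero => simp
  | succ u ih =>
    have h1 : d.natAbs * (u+1) = d.natAbs * u + d.natAbs := by ring
    have h2 : c.natAbs * (u+1) = c.natAbs * u + c.natAbs := by ring
    rw [h1, h2]
    calc bsB c d ^ (d.natAbs * u + d.natAbs) * bsA c d
        = bsB c d ^ (d.natAbs * u) * (bsB c d ^ d.natAbs * bsA c d) := by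
          rw [pow_add, mul_assoc]
      _ = bsB c d ^ (d.natAbs * u) * (bsA c d * bsB c d ^ c.natAbs) := by
          rw [← bs_relA hcd]
      _ = (bsB c d ^ (d.natAbs * u) * bsA c d) * bsB c d ^ c.natAbs := by
          rw [mul_assoc]
      _ = (bsA c d * bsB c d ^ (c.natAbs * u)) * bsB c d ^ c.natAbs := by rw [ih]
      _ = bsA c d * bsB c d ^ (c.natAbs * u + c.natAbs) := by rw [mul_assoc, ← pow_add]

lemma bs_relB' (hcd : ¬ 0 < c * d) (u : ℕ) :
    bsB c d ^ (d.natAbs * u) * bsA c d * bsB c d ^ (c.natAbs * u) = bsA c d := by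
  induction u with
  | zero => simp
  | succ u ih =>
    have h1 : d.natAbs * (u+1) = d.natAbs * u + d.natAbs := by ring
    have h2 : c.natAbs * (u+1) = c.natAbs + c.natAbs * u := by ring
    rw [h1, h2, pow_add, pow_add]
    calc bsB c d ^ (d.natAbs * u) * bsB c d ^ d.natAbs * bsA c d *
          (bsB c d ^ c.natAbs * bsB c d ^ (c.natAbs * u))
        = bsB c d ^ (d.natAbs * u) * (bsB c d ^ d.natAbs * bsA c d * bsB c d ^ c.natAbs) *
            bsB c d ^ (c.natAbs * u) := by simp only [mul_assoc]
      _ = bsB c d ^ (d.natAbs * u) * bsA c d * bsB c d ^ (c.natAbs * u) := by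
          rw [bs_relB hcd, mul_assoc]
      _ = bsA c d := ih

lemma height_zero : ∀ s : BSM c d, ((Phi hd) s).w = [] → ∃ p : ℕ, s = bsB c d ^ p := by
  intro s
  induction s using Con.induction_on with
  | H w =>
    induction w using FreeMonoid.recOn with
    | one => exact fun _ => ⟨0, by simp⟩
    | of_mul x xs ihx =>
      have hmk : ∀ (x' : FreeMonoid (Fin 2)),
          (x' : (BSCon c d).Quotient) = (BSCon c d).mk' x' := fun _ => rfl
      simp only [hmk] at ihx ⊢
      intro hw
      rw [map_mul, map_mul (Phi hd), w_mul, List.append_eq_nil_iff] at hw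
      obtain ⟨hw1, hw2⟩ := hw
      rcases fin2_cases x with rfl | rfl
      · rw [show (BSCon c d).mk' (FreeMonoid.of (0 : Fin 2)) = bsA c d from rfl, Phi_a] at hw1
        exact absurd hw1 (by simp)
      · have hlen : (((Phi hd) ((BSCon c d).mk' xs)).w).length = 0 := by
          have := congrArg List.length hw2
          rwa [length_resid, List.length_nil] at this
        obtain ⟨p, hp⟩ := ihx (List.length_eq_zero_iff.mp hlen)
        refine ⟨p + 1, ?_⟩
        rw [map_mul, show (BSCon c d).mk' (FreeMonoid.of (1 : Fin 2)) = bsB c d from rfl, hp,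
          ← pow_succ']

lemma bpow_comm (m n : ℕ) : bsB c d ^ m * bsB c d ^ n = bsB c d ^ n * bsB c d ^ m := by
  rw [← pow_add, ← pow_add, Nat.add_comm]

lemma commul (s : BSM c d) (p : ℕ) :
    ∃ x : BSM c d, ∃ q : ℕ, bsB c d ^ p * x = s * bsB c d ^ q := by
  have hD : 0 < d.natAbs := Nat.pos_of_ne_zero (NeZero.ne _)
  induction s using Con.induction_on with
  | H w =>
    suffices h : ∀ L : List (Fin 2), ∃ x : BSM c d, ∃ q : ℕ,
        bsB c d ^ p * x = (BSCon c d).mk' (FreeMonoid.ofList L) * bsB c d ^ q by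
      exact h (FreeMonoid.toList w)
    intro L
    induction L using List.reverseRecOn with
    | nil => exact ⟨1, p, by simp⟩
    | append_singleton L g ihL =>
      obtain ⟨x, q, hx⟩ := ihL
      have hsplit : (BSCon c d).mk' (FreeMonoid.ofList (L ++ [g])) =
          (BSCon c d).mk' (FreeMonoid.ofList L) * (BSCon c d).mk' (FreeMonoid.of g) := by
        rw [FreeMonoid.ofList_append, map_mul, FreeMonoid.ofList_singleton]
      set S := (BSCon c d).mk' (FreeMonoid.ofList L) with hS
      have hqD : q + (d.natAbs * q - q) = d.natAbs * q := by
        have : q ≤ d.natAbs * q := Nat.le_mul_of_pos_left q hD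
        omega
      have hq : bsB c d ^ q * bsB c d ^ (d.natAbs * q - q) = bsB c d ^ (d.natAbs * q) := by
        rw [← pow_add, hqD]
      rcases fin2_cases g with rfl | rfl
      · -- g = a
        by_cases hcd : 0 < c * d
        · refine ⟨x * bsB c d ^ (d.natAbs * q - q) * bsA c d, c.natAbs * q, ?_⟩
          rw [hsplit]
          calc bsB c d ^ p * (x * bsB c d ^ (d.natAbs * q - q) * bsA c d)
              = bsB c d ^ p * x * bsB c d ^ (d.natAbs * q - q) * bsA c d := by
                simp only [mul_assoc]
            _ = S * bsB c d ^ q * bsB c d ^ (d.natAbs * q - q) * bsA c d := by rw [hx]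
            _ = S * (bsB c d ^ q * bsB c d ^ (d.natAbs * q - q)) * bsA c d := by
                simp only [mul_assoc]
            _ = S * (bsB c d ^ (d.natAbs * q) * bsA c d) := by rw [hq, mul_assoc]
            _ = S * (bsA c d * bsB c d ^ (c.natAbs * q)) := by rw [bs_relA' hcd q]
            _ = S * (BSCon c d).mk' (FreeMonoid.of (0 : Fin 2)) * bsB c d ^ (c.natAbs * q) := by
                simp only [mul_assoc]; rfl
        · refine ⟨x * bsB c d ^ (d.natAbs * q - q) * bsA c d * bsB c d ^ (c.natAbs * q), 0, ?_⟩
          rw [hsplit]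
          calc bsB c d ^ p *
                (x * bsB c d ^ (d.natAbs * q - q) * bsA c d * bsB c d ^ (c.natAbs * q))
              = bsB c d ^ p * x * bsB c d ^ (d.natAbs * q - q) * bsA c d *
                  bsB c d ^ (c.natAbs * q) := by simp only [mul_assoc]
            _ = S * bsB c d ^ q * bsB c d ^ (d.natAbs * q - q) * bsA c d *
                  bsB c d ^ (c.natAbs * q) := by rw [hx]
            _ = S * (bsB c d ^ q * bsB c d ^ (d.natAbs * q - q)) * bsA c d *
                  bsB c d ^ (c.natAbs * q) := by simp only [mul_assoc]
            _ = S * (bsB c d ^ (d.natAbs * q) * bsA c d * bsB c d ^ (c.natAbs * q)) := by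
                rw [hq]; simp only [mul_assoc]
            _ = S * bsA c d := by rw [bs_relB' hcd q]
            _ = S * (BSCon c d).mk' (FreeMonoid.of (0 : Fin 2)) * bsB c d ^ 0 := by
                rw [pow_zero, mul_one]; rfl
      · -- g = b
        refine ⟨x * bsB c d, q, ?_⟩
        rw [hsplit]
        calc bsB c d ^ p * (x * bsB c d)
            = bsB c d ^ p * x * bsB c d := by rw [mul_assoc]
          _ = S * bsB c d ^ q * bsB c d := by rw [hx]
          _ = S * (bsB c d ^ q * bsB c d ^ 1) := by rw [pow_one, mul_assoc]
          _ = S * (bsB c d ^ 1 * bsB c d ^ q) := by rw [bpow_comm]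
          _ = S * (BSCon c d).mk' (FreeMonoid.of (1 : Fin 2)) * bsB c d ^ q := by
              rw [pow_one]; simp only [mul_assoc]; rfl

lemma bpow_core (p : ℕ) : bsB c d ^ p ∈ core (BSM c d) := by
  intro s
  obtain ⟨x, q, h⟩ := commul s p
  exact ⟨bsB c d ^ p * x, ⟨x, rfl⟩, ⟨bsB c d ^ q, h⟩⟩

include hd in
lemma core_isBpow (hdd : 1 < d.natAbs) {α : BSM c d} (hα : α ∈ core (BSM c d)) :
    ∃ p : ℕ, α = bsB c d ^ p := by
  have hwnil : ((Phi hd) α).w = [] := by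
    cases hw : ((Phi hd) α).w with
    | nil => rfl
    | cons h0 rest =>
      exfalso
      set r : ℕ := if (h0 : ℕ) = 0 then 1 else 0 with hr
      have hrD : r < d.natAbs := by rw [hr]; split <;> omega
      have hrh : r ≠ (h0 : ℕ) := by rw [hr]; split <;> omega
      obtain ⟨z, ⟨x, hxz⟩, ⟨y, hyz⟩⟩ := hα (bsB c d ^ r * bsA c d)
      have heq : α * x = (bsB c d ^ r * bsA c d) * y := hxz.symm.trans hyz
      have hPhi := congrArg (Phi hd) heq
      rw [map_mul, map_mul, map_mul, Phi_bpow, Phi_a, tail_mul_fac _ _ _ hrD _ rfl] at hPhi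
      have hww := congrArg Model.w hPhi
      simp only [w_mul, hw, List.cons_append, List.singleton_append] at hww
      injection hww with h1 h2
      apply hrh
      rw [h1]
  exact height_zero hd α hwnil

include hd in
lemma coreEquiv_iff (hdd : 1 < d.natAbs) {s t : BSM c d} :
    coreEquiv s t ↔ ∃ p q : ℕ, s * bsB c d ^ p = t * bsB c d ^ q := by
  constructor
  · rintro ⟨α, hα, β, hβ, h⟩
    obtain ⟨p, rfl⟩ := core_isBpow hd hdd hα
    obtain ⟨q, rfl⟩ := core_isBpow hd hdd hβ
    exact ⟨p, q, h⟩
  · rintro ⟨p, q, h⟩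
    exact ⟨_, bpow_core p, _, bpow_core q, h⟩

lemma hasNF_phi {s : BSM c d} {k : ℕ} {i : Fin k → ℕ} {m : ℤ}
    (hi : ∀ l, i l < d.natAbs) (h : HasNF c d s k i m) :
    Phi hd s = ⟨List.ofFn (fun l => (⟨i l, hi l⟩ : Fin d.natAbs)), m⟩ := by
  obtain ⟨-, h2⟩ := h
  by_cases hm : 0 ≤ m
  · rw [if_pos hm] at h2
    rw [h2, map_mul, Phi_nfWord hd k i hi, Phi_bpow, mul_def]
    refine congrArg₂ Model.mk (by simp) ?_
    simp [Int.toNat_of_nonneg hm]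
  · rw [if_neg hm] at h2
    have hP := congrArg (Phi hd) h2
    rw [map_mul, Phi_bpow, Phi_nfWord hd k i hi, mul_def] at hP
    simp only [resid_nil, carry_nil, List.append_nil] at hP
    have hw := congrArg Model.w hP
    have ht := congrArg Model.t hP
    simp only at hw ht
    have htt : ((Phi hd) s).t = m := by
      have : (0:ℤ) ≤ -m := by omega
      rw [Int.toNat_of_nonneg this] at ht
      omega
    calc (Phi hd) s = ⟨((Phi hd) s).w, ((Phi hd) s).t⟩ := rfl
      _ = _ := by rw [hw, htt]

lemma nfWord_snoc (k : ℕ) (i : Fin k → ℕ) (r : ℕ) :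
    nfWord c d (k+1) (Fin.snoc i r) = nfWord c d k i * (bsB c d ^ r * bsA c d) := by
  rw [nfWord, nfWord, List.ofFn_succ', List.concat_eq_append, List.prod_append,
    List.prod_cons, List.prod_nil, mul_one]
  have hfn : (fun (l : Fin k) => bsB c d ^ ((Fin.snoc i r : Fin (k+1) → ℕ) (Fin.castSucc l)) * bsA c d) =
      fun l => bsB c d ^ i l * bsA c d := by
    funext l
    rw [Fin.snoc_castSucc]
  rw [hfn, Fin.snoc_last]

lemma exists_nf (s : BSM c d) :
    ∃ (k : ℕ) (i : Fin k → ℕ), (∀ l, i l < d.natAbs) ∧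
      ∃ p u : ℕ, s * bsB c d ^ p = nfWord c d k i * bsB c d ^ u := by
  have hD : 0 < d.natAbs := Nat.pos_of_ne_zero (NeZero.ne _)
  induction s using Con.induction_on with
  | H w =>
    suffices h : ∀ L : List (Fin 2), ∃ (k : ℕ) (i : Fin k → ℕ), (∀ l, i l < d.natAbs) ∧
        ∃ p u : ℕ, (BSCon c d).mk' (FreeMonoid.ofList L) * bsB c d ^ p =
          nfWord c d k i * bsB c d ^ u by
      exact h (FreeMonoid.toList w)
    intro L
    induction L using List.reverseRecOn with
    | nil =>
      refine ⟨0, fun _ => 0, fun l => l.elim0, 0, 0, ?_⟩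
      rw [nfWord_zero]
      rfl
    | append_singleton L g ihL =>
      obtain ⟨k, i, hi, p, u, hpu⟩ := ihL
      have hsplit : (BSCon c d).mk' (FreeMonoid.ofList (L ++ [g])) =
          (BSCon c d).mk' (FreeMonoid.ofList L) * (BSCon c d).mk' (FreeMonoid.of g) := by
        rw [FreeMonoid.ofList_append, map_mul, FreeMonoid.ofList_singleton]
      set S := (BSCon c d).mk' (FreeMonoid.ofList L) with hSdef
      set W := nfWord c d k i with hWdef
      rcases fin2_cases g with rfl | rfl
      · -- g = a
        have hA0 : (BSCon c d).mk' (FreeMonoid.of (0 : Fin 2)) = bsA c d := rfl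
        have hple : p ≤ d.natAbs * p := Nat.le_mul_of_pos_left p hD
        set Q := u + (d.natAbs * p - p) with hQdef
        set r := Q % d.natAbs with hrdef
        set t' := Q / d.natAbs with ht'def
        have hQ' : r + d.natAbs * t' = Q := by
          rw [hrdef, ht'def, Nat.add_comm]
          exact Nat.div_add_mod Q d.natAbs
        have hr : r < d.natAbs := Nat.mod_lt _ hD
        have hi' : ∀ l, (Fin.snoc i r : Fin (k+1) → ℕ) l < d.natAbs := by
          intro l
          refine Fin.lastCases ?_ ?_ l
          · rw [Fin.snoc_last]; exact hr
          · intro l'; rw [Fin.snoc_castSucc]; exact hi l'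
        have hstep : S * bsB c d ^ (d.natAbs * p) = W * bsB c d ^ Q := by
          calc S * bsB c d ^ (d.natAbs * p)
              = S * (bsB c d ^ p * bsB c d ^ (d.natAbs * p - p)) := by
                rw [← pow_add]
                congr 2
                omega
            _ = (S * bsB c d ^ p) * bsB c d ^ (d.natAbs * p - p) := by rw [mul_assoc]
            _ = (W * bsB c d ^ u) * bsB c d ^ (d.natAbs * p - p) := by rw [hpu]
            _ = W * bsB c d ^ Q := by rw [mul_assoc, ← pow_add, hQdef]
        have hbQ : bsB c d ^ Q = bsB c d ^ r * bsB c d ^ (d.natAbs * t') := by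
          rw [← pow_add, hQ']
        by_cases hcd : 0 < c * d
        · refine ⟨k+1, Fin.snoc i r, hi', c.natAbs * p, c.natAbs * t', ?_⟩
          rw [hsplit, hA0]
          calc S * bsA c d * bsB c d ^ (c.natAbs * p)
              = S * (bsA c d * bsB c d ^ (c.natAbs * p)) := by rw [mul_assoc]
            _ = S * (bsB c d ^ (d.natAbs * p) * bsA c d) := by rw [← bs_relA' hcd p]
            _ = (S * bsB c d ^ (d.natAbs * p)) * bsA c d := by rw [mul_assoc]
            _ = (W * bsB c d ^ Q) * bsA c d := by rw [hstep]
            _ = W * (bsB c d ^ r * (bsB c d ^ (d.natAbs * t') * bsA c d)) := by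
                rw [hbQ]
                simp only [mul_assoc]
            _ = W * (bsB c d ^ r * (bsA c d * bsB c d ^ (c.natAbs * t'))) := by
                rw [bs_relA' hcd t']
            _ = (W * (bsB c d ^ r * bsA c d)) * bsB c d ^ (c.natAbs * t') := by
                simp only [mul_assoc]
            _ = nfWord c d (k+1) (Fin.snoc i r) * bsB c d ^ (c.natAbs * t') := by
                rw [nfWord_snoc]
        · refine ⟨k+1, Fin.snoc i r, hi', c.natAbs * t', c.natAbs * p, ?_⟩
          rw [hsplit, hA0]
          calc S * bsA c d * bsB c d ^ (c.natAbs * t')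
              = S * (bsB c d ^ (d.natAbs * p) * bsA c d * bsB c d ^ (c.natAbs * p)) *
                  bsB c d ^ (c.natAbs * t') := by rw [bs_relB' hcd p]
            _ = (S * bsB c d ^ (d.natAbs * p)) *
                  (bsA c d * (bsB c d ^ (c.natAbs * p) * bsB c d ^ (c.natAbs * t'))) := by
                simp only [mul_assoc]
            _ = (W * bsB c d ^ Q) *
                  (bsA c d * (bsB c d ^ (c.natAbs * t') * bsB c d ^ (c.natAbs * p))) := by
                rw [hstep, bpow_comm]
            _ = W * ((bsB c d ^ r * (bsB c d ^ (d.natAbs * t') * bsA c d *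
                  bsB c d ^ (c.natAbs * t'))) * bsB c d ^ (c.natAbs * p)) := by
                rw [hbQ]
                simp only [mul_assoc]
            _ = W * ((bsB c d ^ r * bsA c d) * bsB c d ^ (c.natAbs * p)) := by
                rw [bs_relB' hcd t']
            _ = (W * (bsB c d ^ r * bsA c d)) * bsB c d ^ (c.natAbs * p) := by
                simp only [mul_assoc]
            _ = nfWord c d (k+1) (Fin.snoc i r) * bsB c d ^ (c.natAbs * p) := by
                rw [nfWord_snoc]
      · -- g = b
        have hB1 : (BSCon c d).mk' (FreeMonoid.of (1 : Fin 2)) = bsB c d := rfl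
        refine ⟨k, i, hi, p, u + 1, ?_⟩
        rw [hsplit, hB1]
        calc S * bsB c d * bsB c d ^ p
            = S * (bsB c d ^ 1 * bsB c d ^ p) := by rw [mul_assoc, pow_one]
          _ = S * (bsB c d ^ p * bsB c d ^ 1) := by rw [bpow_comm]
          _ = (S * bsB c d ^ p) * bsB c d ^ 1 := by rw [mul_assoc]
          _ = (W * bsB c d ^ u) * bsB c d ^ 1 := by rw [hpu]
          _ = W * bsB c d ^ (u + 1) := by rw [mul_assoc, ← pow_add]

end BS

end BSAux

/-- In `BS(c,d)⁺` with `|d| > 1`: two elements of height `≥ 1` in normal form are core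
equivalent iff their heights and `b`-exponent patterns agree; consequently the number of
core classes at height `k` is `|d|^k`, and `N(s) = |d|^{θ(s)}` satisfies
`|N⁻¹(n)/∼| = n`.  Here `θ` is the height homomorphism. -/
theorem bs_coreEquiv_and_scale (c d : ℤ) (hc : c ≠ 0) (hd : 1 < d.natAbs)
    (θ : BSM c d →* Multiplicative ℕ)
    (hθa : θ (bsA c d) = Multiplicative.ofAdd 1) (hθb : θ (bsB c d) = 1) :
    (∀ (s t : BSM c d) (k k' : ℕ) (i : Fin k → ℕ) (j : Fin k' → ℕ) (m n : ℤ),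
      1 ≤ k → 1 ≤ k' → HasNF c d s k i m → HasNF c d t k' j n →
      (coreEquiv s t ↔ ∃ h : k = k', ∀ l : Fin k, i l = j (Fin.cast h l))) ∧
    (∀ k : ℕ,
      (classSetN (fun s : BSM c d => d.natAbs ^ Multiplicative.toAdd (θ s))
          (d.natAbs ^ k)).ncard = d.natAbs ^ k) ∧
    (∀ n ∈ Set.range (fun s : BSM c d => d.natAbs ^ Multiplicative.toAdd (θ s)),
      (classSetN (fun s : BSM c d => d.natAbs ^ Multiplicative.toAdd (θ s)) n).ncard = n) := by
  clear hc
  haveI : NeZero d.natAbs := ⟨by omega⟩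
  have hd0 : d ≠ 0 := by
    intro h
    rw [h] at hd
    simp at hd
  have hθ : ∀ s : BSM c d, θ s = Multiplicative.ofAdd ((BSAux.Phi hd0 s).w.length) :=
    BSAux.theta_eq hd0 θ hθa hθb
  have hlen : ∀ s : BSM c d, Multiplicative.toAdd (θ s) = ((BSAux.Phi hd0) s).w.length := by
    intro s
    rw [hθ s]
    rfl
  have hD2 : 2 ≤ d.natAbs := hd
  -- extraction of `b`-power common-multiple form from a normal form
  have extract : ∀ (z : BSM c d) (k0 : ℕ) (i0 : Fin k0 → ℕ) (m0 : ℤ), HasNF c d z k0 i0 m0 →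
      ∃ p u : ℕ, z * bsB c d ^ p = nfWord c d k0 i0 * bsB c d ^ u := by
    intro z k0 i0 m0 hz
    obtain ⟨-, h2⟩ := hz
    by_cases hm : 0 ≤ m0
    · rw [if_pos hm] at h2
      exact ⟨0, m0.toNat, by rw [pow_zero, mul_one, h2]⟩
    · rw [if_neg hm] at h2
      exact ⟨(-m0).toNat, 0, by rw [pow_zero, mul_one, h2]⟩
  have ce_symm : ∀ x y : BSM c d, coreEquiv x y → coreEquiv y x := by
    intro x y h
    obtain ⟨p, q, he⟩ := (BSAux.coreEquiv_iff hd0 hd).mp h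
    exact (BSAux.coreEquiv_iff hd0 hd).mpr ⟨q, p, he.symm⟩
  have ce_trans : ∀ x y z : BSM c d, coreEquiv x y → coreEquiv y z → coreEquiv x z := by
    intro x y z h1 h2
    obtain ⟨p1, q1, he1⟩ := (BSAux.coreEquiv_iff hd0 hd).mp h1
    obtain ⟨p2, q2, he2⟩ := (BSAux.coreEquiv_iff hd0 hd).mp h2
    refine (BSAux.coreEquiv_iff hd0 hd).mpr ⟨p1 + p2, q2 + q1, ?_⟩
    calc x * bsB c d ^ (p1 + p2) = (x * bsB c d ^ p1) * bsB c d ^ p2 := by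
          rw [mul_assoc, ← pow_add]
      _ = (y * bsB c d ^ q1) * bsB c d ^ p2 := by rw [he1]
      _ = y * (bsB c d ^ q1 * bsB c d ^ p2) := by rw [mul_assoc]
      _ = y * (bsB c d ^ p2 * bsB c d ^ q1) := by rw [BSAux.bpow_comm]
      _ = (y * bsB c d ^ p2) * bsB c d ^ q1 := by rw [mul_assoc]
      _ = (z * bsB c d ^ q2) * bsB c d ^ q1 := by rw [he2]
      _ = z * bsB c d ^ (q2 + q1) := by rw [mul_assoc, ← pow_add]
  -- Part 1
  have part1 : ∀ (s t : BSM c d) (k k' : ℕ) (i : Fin k → ℕ) (j : Fin k' → ℕ) (m n : ℤ),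
      1 ≤ k → 1 ≤ k' → HasNF c d s k i m → HasNF c d t k' j n →
      (coreEquiv s t ↔ ∃ h : k = k', ∀ l : Fin k, i l = j (Fin.cast h l)) := by
    intro s t k k' i j m n _ _ hs ht
    have hiD := hs.1
    have hjD := ht.1
    have hPs := BSAux.hasNF_phi hd0 hiD hs
    have hPt := BSAux.hasNF_phi hd0 hjD ht
    constructor
    · intro hce
      obtain ⟨p, q, he⟩ := (BSAux.coreEquiv_iff hd0 hd).mp hce
      have hPhi := congrArg (BSAux.Phi hd0) he
      rw [map_mul, map_mul, BSAux.Phi_bpow, BSAux.Phi_bpow, hPs, hPt] at hPhi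
      have hww := congrArg BSAux.Model.w hPhi
      simp only [BSAux.w_mul, BSAux.resid_nil, List.append_nil] at hww
      have hkk' : k = k' := by
        have := congrArg List.length hww
        simpa [List.length_ofFn] using this
      refine ⟨hkk', ?_⟩
      subst hkk'
      have hfn : (fun l => (⟨i l, hiD l⟩ : Fin d.natAbs)) = fun l => ⟨j l, hjD l⟩ :=
        List.ofFn_inj.mp hww
      intro l
      exact congrArg Fin.val (congrFun hfn l)
    · rintro ⟨hkk', hij⟩
      subst hkk'
      have hW : nfWord c d k i = nfWord c d k j := by
        have : i = j := funext fun l => hij l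
        rw [this]
      obtain ⟨p, u, hsu⟩ := extract s k i m hs
      obtain ⟨q, v, htv⟩ := extract t k j n ht
      refine (BSAux.coreEquiv_iff hd0 hd).mpr ⟨p + v, q + u, ?_⟩
      calc s * bsB c d ^ (p + v) = (s * bsB c d ^ p) * bsB c d ^ v := by
            rw [mul_assoc, ← pow_add]
        _ = (nfWord c d k i * bsB c d ^ u) * bsB c d ^ v := by rw [hsu]
        _ = nfWord c d k j * (bsB c d ^ u * bsB c d ^ v) := by rw [hW, mul_assoc]
        _ = nfWord c d k j * (bsB c d ^ v * bsB c d ^ u) := by rw [BSAux.bpow_comm]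
        _ = (nfWord c d k j * bsB c d ^ v) * bsB c d ^ u := by rw [mul_assoc]
        _ = (t * bsB c d ^ q) * bsB c d ^ u := by rw [htv]
        _ = t * bsB c d ^ (q + u) := by rw [mul_assoc, ← pow_add]
  -- Part 2
  have part2 : ∀ k : ℕ,
      (classSetN (fun s : BSM c d => d.natAbs ^ Multiplicative.toAdd (θ s))
          (d.natAbs ^ k)).ncard = d.natAbs ^ k := by
    intro k
    set N : BSM c d → ℕ := fun s => d.natAbs ^ Multiplicative.toAdd (θ s) with hNdef
    have hNiff : ∀ s : BSM c d, N s = d.natAbs ^ k ↔ ((BSAux.Phi hd0) s).w.length = k := by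
      intro s
      rw [hNdef]
      simp only
      rw [hlen s]
      exact ⟨fun h => Nat.pow_right_injective hD2 h, fun h => by rw [h]⟩
    set nfW : (Fin k → Fin d.natAbs) → BSM c d :=
      fun v => nfWord c d k (fun l => (v l : ℕ)) with hnfWdef
    have hPhiNfW : ∀ v, (BSAux.Phi hd0) (nfW v) = ⟨List.ofFn v, 0⟩ := by
      intro v
      rw [hnfWdef]
      simp only
      rw [BSAux.Phi_nfWord hd0 k _ (fun l => (v l).2)]
    have hN_nfW : ∀ v, N (nfW v) = d.natAbs ^ k := by
      intro v
      rw [hNiff, hPhiNfW]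
      simp [List.length_ofFn]
    set F : (Fin k → Fin d.natAbs) → Set (BSM c d) :=
      fun v => {t | N t = d.natAbs ^ k ∧ coreEquiv (nfW v) t} with hFdef
    have claim1 : classSetN N (d.natAbs ^ k) = Set.range F := by
      ext C
      constructor
      · rintro ⟨s, hs, rfl⟩
        obtain ⟨k0, i, hi, p, u, hpu⟩ := BSAux.exists_nf s
        have h1 := congrArg (fun z => ((BSAux.Phi hd0) z).w.length) hpu
        simp only [map_mul, BSAux.Phi_bpow, BSAux.Phi_nfWord hd0 k0 i hi, BSAux.w_mul,
          List.length_append, BSAux.length_resid, List.length_nil, List.length_ofFn] at h1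
        have hk0 : k0 = k := by
          have hsk := (hNiff s).mp hs
          omega
        subst hk0
        refine ⟨fun l => ⟨i l, hi l⟩, ?_⟩
        have hWeq : nfW (fun l => ⟨i l, hi l⟩) = nfWord c d _ i := by
          rw [hnfWdef]
        have hsv : coreEquiv s (nfW (fun l => ⟨i l, hi l⟩)) := by
          refine (BSAux.coreEquiv_iff hd0 hd).mpr ⟨p, u, ?_⟩
          rw [hWeq, hpu]
        ext z
        simp only [hFdef, Set.mem_setOf_eq]
        constructor
        · rintro ⟨h1', h2'⟩
          exact ⟨h1', ce_trans _ _ _ hsv h2'⟩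
        · rintro ⟨h1', h2'⟩
          exact ⟨h1', ce_trans _ _ _ (ce_symm _ _ hsv) h2'⟩
      · rintro ⟨v, rfl⟩
        exact ⟨nfW v, hN_nfW v, rfl⟩
    have claim2 : Function.Injective F := by
      intro v v' hvv'
      have h1 : nfW v' ∈ F v' :=
        ⟨hN_nfW v', (BSAux.coreEquiv_iff hd0 hd).mpr ⟨0, 0, rfl⟩⟩
      rw [← hvv'] at h1
      obtain ⟨p, q, he⟩ := (BSAux.coreEquiv_iff hd0 hd).mp h1.2
      have hPhi := congrArg (BSAux.Phi hd0) he
      rw [map_mul, map_mul, BSAux.Phi_bpow, BSAux.Phi_bpow, hPhiNfW v, hPhiNfW v'] at hPhi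
      have hww := congrArg BSAux.Model.w hPhi
      simp only [BSAux.w_mul, BSAux.resid_nil, List.append_nil] at hww
      exact List.ofFn_inj.mp hww
    rw [claim1, ← Set.image_univ, Set.ncard_image_of_injective _ claim2, Set.ncard_univ]
    simp [Nat.card_eq_fintype_card, Fintype.card_fun, Fintype.card_fin]
  refine ⟨part1, part2, ?_⟩
  rintro n ⟨s, rfl⟩
  exact part2 (Multiplicative.toAdd (θ s))
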